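/- arXiv:1511.09406 — 3 statements merged into one kernel-verified Lean document; each statement's English description precedes it below -/
import Mathlib

section
/- If h : ℝ → ℝ is continuous with h(s) = 0 for s ≤ 0 and the map s ↦ h(s)/s is strictly increasing on (0,∞), then for each s > 0 one has s·h(s) > 2·H(s), where H(s) = ∫₀ˢ h(t) dt. -/
theorem stmt_2 (h : ℝ → ℝ) (hc : Continuous h) (h0 : ∀ s ≤ (0:ℝ), h s = 0)
    (hmono : StrictMonoOn (fun s => h s / s) (Set.Ioi 0)) :
    ∀ s > (0:ℝ), 2 * (∫ t in (0:ℝ)..s, h t) < s * h s := by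
  intro s hs
  have key : (∫ t in (0:ℝ)..s, h t) < ∫ t in (0:ℝ)..s, t * (h s / s) := by
    apply intervalIntegral.integral_lt_integral_of_continuousOn_of_le_of_exists_lt hs
      hc.continuousOn (by fun_prop)
    · intro x hx
      rcases eq_or_lt_of_le hx.2 with hxs | hxs
      · subst hxs; rw [mul_div_cancel₀ _ (ne_of_gt hs)]
      · have := hmono (Set.mem_Ioi.2 hx.1) (Set.mem_Ioi.2 hs) hxs
        simp only at this
        have := (div_lt_div_iff₀ hx.1 hs).mp this
        refine le_of_lt ?_
        rw [mul_div_assoc', lt_div_iff₀ hs]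
        linarith
    · refine ⟨s/2, ⟨by linarith, by linarith⟩, ?_⟩
      have h2 : (0:ℝ) < s/2 := by linarith
      have := hmono (Set.mem_Ioi.2 h2) (Set.mem_Ioi.2 hs) (by linarith)
      simp only at this
      have := (div_lt_div_iff₀ h2 hs).mp this
      rw [mul_div_assoc', lt_div_iff₀ hs]
      linarith
  have : (∫ t in (0:ℝ)..s, t * (h s / s)) = s * h s / 2 := by
    rw [intervalIntegral.integral_mul_const, integral_id]
    field_simp
    ring
  rw [this] at key
  linarith
end

section
/- Let ψ solve ψ'' + ((1−2α)/s)ψ' = ψ on (0,∞), with −lim_{s→0⁺} s^{1−2α}ψ'(s) = k_α and ψ(0⁺) = 1, and suppose s^{1−2α}ψ'(s)ψ(s) → 0 as s → ∞. Then for each μ > 0, ∫₀^∞ y^{1−2α}·(μ·ψ(√μ y)² + μ·ψ'(√μ y)²) dy = k_α·μ^α. -/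
open MeasureTheory Filter

/-- Integral identity for the Bessel extension kernel:
`∫₀^∞ y^{1−2α}(μ ψ(√μ y)² + μ ψ'(√μ y)²) dy = k_α μ^α`. -/
theorem stmt_11 (α kα : ℝ) (hα : α ∈ Set.Ioo (0:ℝ) 1) (hkα : 0 < kα)
    (ψ ψ' ψ'' : ℝ → ℝ)
    (hψ : ∀ s > (0:ℝ), HasDerivAt ψ (ψ' s) s)
    (hψ' : ∀ s > (0:ℝ), HasDerivAt ψ' (ψ'' s) s)
    (heq : ∀ s > (0:ℝ), ψ'' s + (1 - 2 * α) / s * ψ' s = ψ s)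
    (hψ0 : Tendsto ψ (nhdsWithin 0 (Set.Ioi 0)) (nhds 1))
    (hψ'0 : Tendsto (fun s : ℝ => s ^ (1 - 2 * α) * ψ' s)
      (nhdsWithin 0 (Set.Ioi 0)) (nhds (-kα)))
    (hψtop : Tendsto (fun s : ℝ => s ^ (1 - 2 * α) * ψ' s * ψ s) atTop (nhds 0))
    (m : ℝ) (hm : 0 < m)
    (hint : IntegrableOn
      (fun y : ℝ => y ^ (1 - 2 * α) *
        (m * ψ (Real.sqrt m * y) ^ 2 + m * ψ' (Real.sqrt m * y) ^ 2))
      (Set.Ioi 0)) :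
    ∫ y in Set.Ioi (0:ℝ),
        y ^ (1 - 2 * α) *
          (m * ψ (Real.sqrt m * y) ^ 2 + m * ψ' (Real.sqrt m * y) ^ 2) =
      kα * m ^ α := by
  have hsm : (0:ℝ) < Real.sqrt m := Real.sqrt_pos.mpr hm
  set p : ℝ := 1 - 2 * α with hp
  -- the antiderivative
  set G : ℝ → ℝ := fun y => if y = 0 then m ^ α * (-kα)
    else m ^ α * ((Real.sqrt m * y) ^ p * ψ' (Real.sqrt m * y) * ψ (Real.sqrt m * y))
    with hG
  have hG0 : G 0 = m ^ α * (-kα) := by simp [hG]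
  -- key constant identity
  have hc : m ^ α * (Real.sqrt m ^ p * Real.sqrt m) = m := by
    rw [Real.sqrt_eq_rpow, ← Real.rpow_mul hm.le, ← Real.rpow_add hm, ← Real.rpow_add hm]
    rw [show α + (1 / 2 * p + 1 / 2) = 1 by rw [hp]; ring, Real.rpow_one]
  -- the map y ↦ √m * y, restricted to positives
  have hmap : Tendsto (fun y : ℝ => Real.sqrt m * y)
      (nhdsWithin 0 (Set.Ioi 0)) (nhdsWithin 0 (Set.Ioi 0)) := by
    rw [tendsto_nhdsWithin_iff]
    constructor
    · have : Tendsto (fun y : ℝ => Real.sqrt m * y) (nhds 0) (nhds (Real.sqrt m * 0)) :=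
        (continuous_const.mul continuous_id).tendsto 0
      simpa using this.mono_left nhdsWithin_le_nhds
    · filter_upwards [self_mem_nhdsWithin] with y hy
      exact mul_pos hsm hy
  -- continuity of G at 0 from the right
  have hcont : ContinuousWithinAt G (Set.Ici 0) 0 := by
    rw [← continuousWithinAt_Ioi_iff_Ici]
    have h1 : Tendsto (fun y : ℝ =>
        m ^ α * ((Real.sqrt m * y) ^ p * ψ' (Real.sqrt m * y) * ψ (Real.sqrt m * y)))
        (nhdsWithin 0 (Set.Ioi 0)) (nhds (m ^ α * (-kα * 1))) :=
      (((hψ'0.comp hmap).mul (hψ0.comp hmap)).const_mul _)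
    have h2 : Tendsto G (nhdsWithin 0 (Set.Ioi 0)) (nhds (m ^ α * (-kα * 1))) := by
      refine h1.congr' ?_
      filter_upwards [self_mem_nhdsWithin] with y hy
      simp [hG, ne_of_gt (show (0:ℝ) < y from hy)]
    unfold ContinuousWithinAt
    rw [hG0]
    simpa using h2
  -- G tends to 0 at infinity
  have htop : Tendsto G atTop (nhds 0) := by
    have hmap2 : Tendsto (fun y : ℝ => Real.sqrt m * y) atTop atTop :=
      Tendsto.const_mul_atTop hsm tendsto_id
    have h1 : Tendsto (fun y : ℝ =>
        m ^ α * ((Real.sqrt m * y) ^ p * ψ' (Real.sqrt m * y) * ψ (Real.sqrt m * y)))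
        atTop (nhds (m ^ α * 0)) := (hψtop.comp hmap2).const_mul _
    rw [mul_zero] at h1
    refine h1.congr' ?_
    filter_upwards [eventually_gt_atTop 0] with y hy
    simp [hG, ne_of_gt hy]
  -- derivative of G on (0, ∞)
  have hderiv : ∀ y ∈ Set.Ioi (0:ℝ), HasDerivAt G
      (y ^ p * (m * ψ (Real.sqrt m * y) ^ 2 + m * ψ' (Real.sqrt m * y) ^ 2)) y := by
    intro y hy
    have hy0 : (0:ℝ) < y := hy
    set s : ℝ := Real.sqrt m * y with hs
    have hs0 : (0:ℝ) < s := mul_pos hsm hy0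
    have hlin : HasDerivAt (fun y : ℝ => Real.sqrt m * y) (Real.sqrt m) y := by
      simpa using (hasDerivAt_id y).const_mul (Real.sqrt m)
    have h1 : HasDerivAt (fun y : ℝ => (Real.sqrt m * y) ^ p)
        (p * s ^ (p - 1) * Real.sqrt m) y :=
      (Real.hasDerivAt_rpow_const (Or.inl hs0.ne')).comp y hlin
    have h2 : HasDerivAt (fun y : ℝ => ψ' (Real.sqrt m * y)) (ψ'' s * Real.sqrt m) y :=
      (hψ' s hs0).comp y hlin
    have h3 : HasDerivAt (fun y : ℝ => ψ (Real.sqrt m * y)) (ψ' s * Real.sqrt m) y :=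
      (hψ s hs0).comp y hlin
    have h4 : HasDerivAt (fun y : ℝ =>
        m ^ α * ((Real.sqrt m * y) ^ p * ψ' (Real.sqrt m * y) * ψ (Real.sqrt m * y)))
        (m ^ α * ((p * s ^ (p - 1) * Real.sqrt m * ψ' s + s ^ p * (ψ'' s * Real.sqrt m)) * ψ s
          + s ^ p * ψ' s * (ψ' s * Real.sqrt m))) y :=
      ((h1.mul h2).mul h3).const_mul _
    have hG4 : HasDerivAt G
        (m ^ α * ((p * s ^ (p - 1) * Real.sqrt m * ψ' s + s ^ p * (ψ'' s * Real.sqrt m)) * ψ s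
          + s ^ p * ψ' s * (ψ' s * Real.sqrt m))) y := by
      refine h4.congr_of_eventuallyEq ?_
      filter_upwards [eventually_gt_nhds hy0] with z hz
      simp [hG, ne_of_gt hz]
    convert hG4 using 1
    -- algebra: use the ODE and s = √m y
    have heqs : ψ'' s = ψ s - (1 - 2 * α) / s * ψ' s := by
      have := heq s hs0; linarith
    rw [heqs]
    have hsp1 : s ^ (p - 1) = s ^ p / s := by
      rw [Real.rpow_sub hs0, Real.rpow_one]
    have hsplit : s ^ p = Real.sqrt m ^ p * y ^ p :=
      Real.mul_rpow hsm.le hy0.le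
    rw [hsp1, hsplit]
    have hyne : y ≠ 0 := hy0.ne'
    have hsne : s ≠ 0 := hs0.ne'
    have hc2 : m ^ α * Real.sqrt m ^ p = Real.sqrt m := by
      have h2 : Real.sqrt m * Real.sqrt m = m := Real.mul_self_sqrt hm.le
      have h3 : m ^ α * Real.sqrt m ^ p * Real.sqrt m = Real.sqrt m * Real.sqrt m := by
        rw [h2]; linarith [hc]
      exact mul_right_cancel₀ hsm.ne' h3
    have hss : Real.sqrt m ^ 2 = m := Real.sq_sqrt hm.le
    field_simp
    linear_combination (-(Real.sqrt m ^ 2 * y * (ψ s ^ 2 + ψ' s ^ 2))) * hc2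
      - (y * (ψ s ^ 2 + ψ' s ^ 2) * Real.sqrt m) * hss
  have key := integral_Ioi_of_hasDerivAt_of_tendsto hcont hderiv hint htop
  rw [key, hG0]
  ring
end

section
/- Let I : E → ℝ be C¹ on a Hilbert space satisfying the Palais–Smale condition, bounded below on a closed set M ⊂ E, and suppose A ⊂ M^a := {u ∈ M : I(u) ≤ a} is compact, A is contractible in M^c for some c > a, but A is not contractible in M^a. Then I has a critical point u ∈ M with a < I(u) ≤ c. (Abstract linking/deformation statement used to produce the extra (cat+1)-th solution.) -/
open Set

/-- `A` is contractible within `S` (subsets of an ambient space `E`): there is a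
homotopy in `S` from the inclusion of `A` to a constant point of `S`. -/
def ContractibleWithin {E : Type*} [TopologicalSpace E] (A S : Set E) : Prop :=
  ∃ z₀ ∈ S, ∃ F : C((Set.Icc (0:ℝ) 1) × A, E),
    (∀ x : A, F (⟨0, by norm_num⟩, x) = (x : E)) ∧
    (∀ x : A, F (⟨1, by norm_num⟩, x) = z₀) ∧
    ∀ t x, F (t, x) ∈ S

/-- A Palais–Smale, deformation-lemma argument: if a compact `A ⊆ M^a` is contractible
in `M^c` but not in `M^a` (`a < c`), then `I` has a critical point `u ∈ M` with
`a < I(u) ≤ c`. -/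
theorem stmt_17 {E : Type*} [NormedAddCommGroup E] [InnerProductSpace ℝ E]
    (M : Set E) (hMclosed : IsClosed M) (I : E → ℝ) (crit : E → Prop)
    (a c : ℝ) (hac : a < c)
    (A : Set E) (hAcompact : IsCompact A)
    (hAsub : A ⊆ {u ∈ M | I u ≤ a})
    (hAcontr : ContractibleWithin A {u ∈ M | I u ≤ c})
    (hAnot : ¬ ContractibleWithin A {u ∈ M | I u ≤ a})
    -- deformation lemma (consequence of the Palais–Smale condition): if there is no
    -- critical value in (a, c], then M^c deformation-retracts onto M^a
    (hdeform : (¬ ∃ u ∈ M, crit u ∧ a < I u ∧ I u ≤ c) →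
      ∃ H : C((Set.Icc (0:ℝ) 1) × {u ∈ M | I u ≤ c}, E),
        (∀ x : {u ∈ M | I u ≤ c}, H (⟨0, by norm_num⟩, x) = (x : E)) ∧
        (∀ x : {u ∈ M | I u ≤ c}, H (⟨1, by norm_num⟩, x) ∈ {u ∈ M | I u ≤ a}) ∧
        (∀ t x, H (t, x) ∈ {u ∈ M | I u ≤ c}) ∧
        (∀ x : {u ∈ M | I u ≤ c}, (x : E) ∈ {u ∈ M | I u ≤ a} →
          ∀ t, H (t, x) = (x : E))) :
    ∃ u ∈ M, crit u ∧ a < I u ∧ I u ≤ c := by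
  by_contra hno
  obtain ⟨H, hH0, hH1, hHmem, hHfix⟩ := hdeform hno
  obtain ⟨z₀, hz₀, F, hF0, hF1, hFmem⟩ := hAcontr
  apply hAnot
  -- restrict F's codomain to M^c
  let F' : C((Set.Icc (0:ℝ) 1) × A, {u ∈ M | I u ≤ c}) :=
    ⟨fun p => ⟨F p, hFmem p.1 p.2⟩, (F.continuous).subtype_mk _⟩
  refine ⟨H (⟨1, by norm_num⟩, ⟨z₀, hz₀⟩), hH1 _, ⟨fun p => H (⟨1, by norm_num⟩, F' p),
    (H.continuous).comp (Continuous.prodMk continuous_const F'.continuous)⟩, ?_, ?_, ?_⟩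
  · intro x
    have hx : ((F' (⟨0, by norm_num⟩, x) : {u ∈ M | I u ≤ c}) : E) ∈ {u ∈ M | I u ≤ a} := by
      have : ((F' (⟨0, by norm_num⟩, x) : {u ∈ M | I u ≤ c}) : E) = (x : E) := hF0 x
      rw [this]; exact hAsub x.2
    exact (hHfix _ hx ⟨1, by norm_num⟩).trans (hF0 x)
  · intro x
    exact congrArg (fun y => H (⟨1, by norm_num⟩, y)) (Subtype.ext (hF1 x))
  · intro t x
    exact hH1 _
end
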